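/- Under the stated assumptions, if ℓ, h ∈ (0, min{1, m_b} ε), then there exists a constant C > 0, depending only on K, b, ε, l₀, r₀ and m_b (but not on ℓ, h, b̂ or the probability space), such that ∫_{I₀} E(|b̂_{ℓ,h}(x) − b(x)|) dx ≤ C ( ℓ + h + R(b̂)^{1/2} + R(b̂)/h ). -/

import Mathlib

/-!
Let `G_η(s) = ∫_s^∞ K_η` (`kernelTail K η`), a smoothing of the step `s ↦ 1_{s<0}`: it is
antitone, equal to `1` below `-η` and to `0` above `η`. Both estimators are integrals of
smoothed steps,
`𝔟̂_h⁻¹(z) = l_{2ε} + ∫_{I_{2ε}} G_h(z - b̂(u)) du` and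
`b̂_{ℓ,h}(x) = b(r_ε) + ∫_{b(r_ε)}^{b(l_ε)} G_ℓ(x - 𝔟̂_h⁻¹(z)) dz`,
and since `b` is decreasing, the same formulas with the sharp step and `b` in place of `b̂` give
back exactly `b⁻¹(z)` and `b(x)`. Over any interval, `∫ |G_η(· - A) - 1_{· < B}| ≤ |A - B| + 2η`:
shifting an antitone `[0,1]`-valued function by `B - A` costs `|A - B|` in `L¹`, and smoothing
the step costs `2η`. Applying this first in `x` (with `A = 𝔟̂_h⁻¹(z)`, `B = b⁻¹(z)`) and then,
after Fubini, in `z` (with `A = b̂(u)`, `B = b(u)`) gives for every realisation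
`∫_{I₀} |b̂_{ℓ,h} - b| ≤ 2ℓ (b(l_ε) - b(r_ε)) + 2h |I_{2ε}| + ∫_{I_{2ε}} |b̂ - b|`.
The bound `|t| ≤ h/2 + t²/(2h)` and Fubini in `(x, ω)` to take expectations finish the proof.
-/

open MeasureTheory

/-- The rescaled kernel `K_η(x) = η⁻¹ K(x/η)`. -/
noncomputable def Kh (K : ℝ → ℝ) (η x : ℝ) : ℝ := η⁻¹ * K (x / η)

/-- The estimator `𝔟̂_h⁻¹(w) = l₀ - 2ε + ∫_{I_{2ε}} ∫_{-∞}^{-w} K_h(-g(z) - y) dy dz`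
of the inverse of `b`, computed from an estimation `g` of `b`. -/
noncomputable def binvEst (K : ℝ → ℝ) (l₀ r₀ ε h : ℝ) (g : ℝ → ℝ) (w : ℝ) : ℝ :=
  (l₀ - 2 * ε) +
    ∫ z in Set.Icc (l₀ - 2 * ε) (r₀ + 2 * ε), ∫ y in Set.Iic (-w), Kh K h (-(g z) - y)

/-- The strictly decreasing estimator
`lo + ∫_{lo}^{hi} ∫_{-∞}^{-x} K_ℓ(-𝔟̂_h⁻¹(z) - y) dy dz`, where in the paper
`lo = b(r₀ + ε)` and `hi = b(l₀ - ε)` (or their estimated versions). -/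
noncomputable def monoEst (K : ℝ → ℝ) (l₀ r₀ ε ℓ h lo hi : ℝ) (g : ℝ → ℝ) (x : ℝ) : ℝ :=
  lo + ∫ z in lo..hi, ∫ y in Set.Iic (-x), Kh K ℓ (-(binvEst K l₀ r₀ ε h g z) - y)

open Set

theorem setIntegral_Iic_comp_sub_left (f : ℝ → ℝ) (c a : ℝ) :
    ∫ y in Iic a, f (c - y) = ∫ t in Ici (c - a), f t := by
  have h := (MeasurableEquiv.subLeft c).measurableEmbedding.setIntegral_map (μ := volume) f
    (Ici (c - a))
  rw [show ⇑(MeasurableEquiv.subLeft c) = (c - ·) from rfl,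
    Measure.map_sub_left_eq_self volume c] at h
  rw [h, show (c - ·) ⁻¹' Ici (c - a) = Iic a by ext; simp]

theorem Antitone.intervalIntegral_abs_sub_comp_sub_le {G : ℝ → ℝ} (hG : Antitone G)
    (h0 : ∀ s, 0 ≤ G s) (h1 : ∀ s, G s ≤ 1) (p q A B : ℝ) :
    ∫ x in p..q, |G (x - A) - G (x - B)| ≤ |A - B| := by
  wlog hAB : A ≤ B generalizing A B
  · simpa only [abs_sub_comm] using this B A (le_of_not_ge hAB)
  have hint : ∀ a b, IntervalIntegrable G volume a b := fun a b => hG.intervalIntegrable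
  have hshift : ∀ c, IntervalIntegrable (fun x => G (x - c)) volume p q := fun c =>
    (hG.comp_monotone fun _ _ h => sub_le_sub_right h c).intervalIntegrable
  calc ∫ x in p..q, |G (x - A) - G (x - B)|
      = (∫ x in p..q, G (x - B)) - ∫ x in p..q, G (x - A) := by
        rw [← intervalIntegral.integral_sub (hshift B) (hshift A)]
        refine intervalIntegral.integral_congr fun x _ => ?_
        rw [abs_sub_comm, abs_of_nonneg (sub_nonneg.2 (hG (by linarith)))]
    _ = (∫ x in (p - B)..(p - A), G x) - ∫ x in (q - B)..(q - A), G x := by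
        simp only [intervalIntegral.integral_comp_sub_right]
        exact intervalIntegral.integral_interval_sub_interval_comm (hint _ _) (hint _ _) (hint _ _)
    _ ≤ ((p - A) - (p - B)) - 0 := by
        gcongr
        · simpa using intervalIntegral.integral_mono_on (a := p - B) (b := p - A) (by linarith)
            (hint _ _) intervalIntegrable_const fun x _ => h1 x
        · exact intervalIntegral.integral_nonneg (by linarith) fun x _ => h0 x
    _ = |A - B| := by rw [abs_of_nonpos (by linarith)]; ring

theorem abs_add_setIntegral_Ioc_sub_le {F : ℝ → ℝ} {a d c : ℝ} (hF : IntegrableOn F (Ioc a d))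
    (hc : c ∈ Icc a d) :
    |a + (∫ z in Ioc a d, F z) - c| ≤ ∫ z in Ioc a d, |F z - (Iio c).indicator 1 z| := by
  have hstep : ∫ z in Ioc a d, (Iio c).indicator (1 : ℝ → ℝ) z = c - a := by
    rw [integral_indicator_one measurableSet_Iio, measureReal_restrict_apply measurableSet_Iio,
      show Iio c ∩ Ioc a d = Ioo a c by ext; simp; grind, Real.volume_real_Ioo_of_le hc.1]
  have hint : IntegrableOn ((Iio c).indicator (1 : ℝ → ℝ)) (Ioc a d) :=
    (integrableOn_const measure_Ioc_lt_top.ne).indicator measurableSet_Iio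
  calc |a + (∫ z in Ioc a d, F z) - c|
      = |∫ z in Ioc a d, (F z - (Iio c).indicator 1 z)| := by
        rw [integral_sub hF hint, hstep]; ring_nf
    _ ≤ ∫ z in Ioc a d, |F z - (Iio c).indicator 1 z| := abs_integral_le_integral_abs

theorem Measurable.indicator_Iio_one {α : Type*} [MeasurableSpace α] {f g : α → ℝ}
    (hf : Measurable f) (hg : Measurable g) :
    Measurable fun a => (Iio (f a)).indicator (1 : ℝ → ℝ) (g a) :=
  measurable_const.indicator (measurableSet_lt hg hf)

theorem integrable_uncurry_of_abs_le {α β : Type*} [MeasurableSpace α] [MeasurableSpace β]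
    {μ : Measure α} {ν : Measure β} [IsFiniteMeasure μ] [IsFiniteMeasure ν] {f : α → β → ℝ}
    (hf : Measurable (Function.uncurry f)) {C : ℝ} (hC : ∀ x y, |f x y| ≤ C) :
    Integrable (Function.uncurry f) (μ.prod ν) :=
  (integrable_const C).mono' hf.aestronglyMeasurable (.of_forall fun p => hC p.1 p.2)

theorem measurable_uncurry_add_setIntegral_comp_sub {α : Type*} [MeasurableSpace α]
    {G : ℝ → ℝ} (hG : Measurable G) {f : α → ℝ → ℝ} (hf : Measurable (Function.uncurry f))
    (c : ℝ) (s : Set ℝ) :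
    Measurable (Function.uncurry fun a w => c + ∫ v in s, G (w - f a v)) :=
  measurable_const.add (StronglyMeasurable.integral_prod_right' (f := fun q : (α × ℝ) × ℝ =>
    G (q.1.2 - f q.1.1 q.2)) (hG.comp ((measurable_snd.comp measurable_fst).sub
      (hf.comp ((measurable_fst.comp measurable_fst).prodMk measurable_snd)))).stronglyMeasurable
    ).measurable

theorem integrable_uncurry_sq_abs_sub {Ω : Type*} [MeasurableSpace Ω] {P : Measure Ω} [SFinite P]
    {s : Set ℝ} (hs : MeasurableSet s) {b : ℝ → ℝ} (hb : Measurable b) {bhat : Ω → ℝ → ℝ}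
    (hbm : Measurable (Function.uncurry bhat))
    (h2 : ∀ x ∈ s, Integrable (fun ω => |bhat ω x - b x| ^ 2) P)
    (h3 : IntegrableOn (fun x => ∫ ω, |bhat ω x - b x| ^ 2 ∂P) s) :
    Integrable (Function.uncurry fun x ω => |bhat ω x - b x| ^ 2) ((volume.restrict s).prod P) := by
  refine (integrable_prod_iff (((hbm.comp measurable_swap).sub
    (hb.comp measurable_fst)).abs.pow_const 2).aestronglyMeasurable).2
    ⟨ae_restrict_of_forall_mem hs h2, ?_⟩
  simp only [norm_pow, Real.norm_eq_abs, abs_abs]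
  exact h3

theorem ContinuousOn.exists_continuous_eqOn_Icc {f : ℝ → ℝ} {a b : ℝ} (hab : a ≤ b)
    (hf : ContinuousOn f (Icc a b)) : ∃ g : ℝ → ℝ, Continuous g ∧ EqOn g f (Icc a b) :=
  ⟨IccExtend hab ((Icc a b).domRestrict f), hf.domRestrict.Icc_extend',
    fun _ hx => IccExtend_of_mem hab _ hx⟩

structure IsSmoothedStep (G : ℝ → ℝ) (η : ℝ) : Prop where
  antitone : Antitone G
  eq_one : ∀ s ≤ -η, G s = 1
  eq_zero : ∀ s, η ≤ s → G s = 0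

namespace IsSmoothedStep

variable {G : ℝ → ℝ} {η : ℝ}

lemma measurable (hG : IsSmoothedStep G η) : Measurable G := hG.antitone.measurable

lemma le_one (hG : IsSmoothedStep G η) (s : ℝ) : G s ≤ 1 := by
  rcases le_total s (-η) with hs | hs
  · exact (hG.eq_one s hs).le
  · exact (hG.antitone hs).trans (hG.eq_one _ le_rfl).le

lemma nonneg (hG : IsSmoothedStep G η) (s : ℝ) : 0 ≤ G s := by
  rcases le_total η s with hs | hs
  · exact (hG.eq_zero s hs).ge
  · exact (hG.eq_zero _ le_rfl).ge.trans (hG.antitone hs)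

lemma abs_le_one (hG : IsSmoothedStep G η) (s : ℝ) : |G s| ≤ 1 :=
  abs_le.2 ⟨by linarith [hG.nonneg s], hG.le_one s⟩

lemma width_nonneg (hG : IsSmoothedStep G η) : 0 ≤ η := by
  by_contra! hη
  have h1 := hG.eq_one 0 (by linarith)
  rw [hG.eq_zero 0 hη.le] at h1
  exact zero_ne_one h1

lemma integrableOn_comp (hG : IsSmoothedStep G η) {s : Set ℝ} (hs : volume s ≠ ⊤) {f : ℝ → ℝ}
    (hf : Measurable f) : IntegrableOn (fun x => G (f x)) s :=
  Measure.integrableOn_of_bounded hs (hG.measurable.comp hf).aestronglyMeasurable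
    (.of_forall fun _ => hG.abs_le_one _)

lemma abs_sub_indicator_le_one (hG : IsSmoothedStep G η) (s : ℝ) (S : Set ℝ) (x : ℝ) :
    |G s - S.indicator 1 x| ≤ 1 := by
  by_cases hx : x ∈ S
  · rw [indicator_of_mem hx, Pi.one_apply, abs_le]
    constructor <;> linarith [hG.nonneg s, hG.le_one s]
  · rw [indicator_of_notMem hx, sub_zero]
    exact hG.abs_le_one s

lemma abs_sub_indicator_le_indicator (hG : IsSmoothedStep G η) (B x : ℝ) :
    |G (x - B) - (Iio B).indicator 1 x| ≤ (Icc (B - η) (B + η)).indicator 1 x := by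
  by_cases hx : x ∈ Icc (B - η) (B + η)
  · rw [indicator_of_mem hx]
    exact hG.abs_sub_indicator_le_one _ _ _
  rw [indicator_of_notMem hx]
  have hη := hG.width_nonneg
  rcases lt_or_ge x (B - η) with hlt | hge
  · rw [hG.eq_one _ (by linarith), indicator_of_mem (mem_Iio.2 (by linarith))]
    simp
  · have : B + η < x := by by_contra! h; exact hx ⟨hge, h⟩
    rw [hG.eq_zero _ (by linarith), indicator_of_notMem (by simp only [mem_Iio, not_lt]; linarith)]
    simp

lemma intervalIntegral_abs_sub_indicator_le (hG : IsSmoothedStep G η) {p q : ℝ} (hpq : p ≤ q)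
    (B : ℝ) : ∫ x in p..q, |G (x - B) - (Iio B).indicator 1 x| ≤ 2 * η := by
  have hη := hG.width_nonneg
  have hind : Integrable ((Icc (B - η) (B + η)).indicator (1 : ℝ → ℝ)) :=
    (integrable_indicator_iff measurableSet_Icc).2 (integrableOn_const measure_Icc_lt_top.ne)
  have hmeas : Measurable fun x => |G (x - B) - (Iio B).indicator 1 x| :=
    ((hG.measurable.comp (measurable_sub_const B)).sub
      (measurable_const.indicator measurableSet_Iio)).abs
  calc ∫ x in p..q, |G (x - B) - (Iio B).indicator 1 x|
      ≤ ∫ x in p..q, (Icc (B - η) (B + η)).indicator 1 x :=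
        intervalIntegral.integral_mono_on hpq
          (hind.intervalIntegrable.mono_fun' hmeas.aestronglyMeasurable (.of_forall fun x => by
            simpa only [Real.norm_eq_abs, abs_abs] using hG.abs_sub_indicator_le_indicator B x))
          hind.intervalIntegrable (fun x _ => hG.abs_sub_indicator_le_indicator B x)
    _ ≤ ∫ x, (Icc (B - η) (B + η)).indicator 1 x := by
        rw [intervalIntegral.integral_of_le hpq]
        exact setIntegral_le_integral hind (.of_forall fun x => indicator_nonneg (by simp) x)
    _ = 2 * η := by
        rw [integral_indicator_one measurableSet_Icc, Real.volume_real_Icc,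
          max_eq_left (by linarith)]
        ring

lemma setIntegral_Ioc_abs_sub_indicator_le (hG : IsSmoothedStep G η) {p q : ℝ} (hpq : p ≤ q)
    (A B : ℝ) : ∫ x in Ioc p q, |G (x - A) - (Iio B).indicator 1 x| ≤ |A - B| + 2 * η := by
  have hGm (c : ℝ) : Measurable fun x => G (x - c) := hG.measurable.comp (measurable_sub_const c)
  have hbdd {f : ℝ → ℝ} (hf : Measurable f) (hC : ∀ x, |f x| ≤ 1) :
      IntervalIntegrable f volume p q :=
    intervalIntegrable_const.mono_fun' hf.aestronglyMeasurable (.of_forall hC)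
  have hshift : IntervalIntegrable (fun x => |G (x - A) - G (x - B)|) volume p q :=
    hbdd ((hGm A).sub (hGm B)).abs fun x => by
      rw [abs_abs, abs_le]
      constructor <;> linarith [hG.nonneg (x - A), hG.le_one (x - B), hG.nonneg (x - B),
        hG.le_one (x - A)]
  have hstep (c : ℝ) :
      IntervalIntegrable (fun x => |G (x - c) - (Iio B).indicator 1 x|) volume p q :=
    hbdd ((hGm c).sub (measurable_const.indicator measurableSet_Iio)).abs fun x => by
      rw [abs_abs]; exact hG.abs_sub_indicator_le_one _ _ _
  rw [← intervalIntegral.integral_of_le hpq]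
  calc ∫ x in p..q, |G (x - A) - (Iio B).indicator 1 x|
      ≤ ∫ x in p..q, (|G (x - A) - G (x - B)| + |G (x - B) - (Iio B).indicator 1 x|) :=
        intervalIntegral.integral_mono_on hpq (hstep A) (hshift.add (hstep B))
          fun x _ => abs_sub_le _ _ _
    _ ≤ |A - B| + 2 * η := by
        rw [intervalIntegral.integral_add hshift (hstep B)]
        gcongr
        · exact hG.antitone.intervalIntegral_abs_sub_comp_sub_le hG.nonneg hG.le_one p q A B
        · exact hG.intervalIntegral_abs_sub_indicator_le hpq B

lemma integrable_uncurry_abs_sub_indicator (hG : IsSmoothedStep G η) {g b : ℝ → ℝ}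
    (hg : Measurable g) (hb : Measurable b) {μ ν : Measure ℝ} [IsFiniteMeasure μ]
    [IsFiniteMeasure ν] :
    Integrable (Function.uncurry fun z u => |G (z - g u) - (Iio (b u)).indicator 1 z|)
      (μ.prod ν) :=
  integrable_uncurry_of_abs_le
    ((hG.measurable.comp (measurable_fst.sub (hg.comp measurable_snd))).sub
      ((hb.comp measurable_snd).indicator_Iio_one measurable_fst)).abs
    fun z u => by rw [abs_abs]; exact hG.abs_sub_indicator_le_one _ _ _

end IsSmoothedStep

noncomputable def kernelTail (K : ℝ → ℝ) (η s : ℝ) : ℝ := ∫ t in Ici s, Kh K η t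

section Kernel

variable {K : ℝ → ℝ} {η : ℝ}

lemma Kh_eq_zero (hKsupp : ∀ y, 1 < |y| → K y = 0) (hη : 0 < η) {x : ℝ} (hx : η < |x|) :
    Kh K η x = 0 := by
  rw [Kh, hKsupp _ (by rwa [abs_div, abs_of_pos hη, one_lt_div hη]), mul_zero]

lemma integrable_Kh (hKint : ∫ y, K y = 1) (hη : η ≠ 0) : Integrable (Kh K η) :=
  ((Integrable.of_integral_ne_zero (by rw [hKint]; exact one_ne_zero)).comp_div hη).const_mul _

lemma integral_Kh (hKint : ∫ y, K y = 1) (hη : 0 < η) : ∫ x, Kh K η x = 1 := by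
  simp only [Kh]
  rw [integral_const_mul, Measure.integral_comp_div, hKint, abs_of_pos hη, smul_eq_mul, mul_one,
    inv_mul_cancel₀ hη.ne']

lemma isSmoothedStep_kernelTail (hK0 : ∀ y, 0 ≤ K y) (hKsupp : ∀ y, 1 < |y| → K y = 0)
    (hKint : ∫ y, K y = 1) (hη : 0 < η) : IsSmoothedStep (kernelTail K η) η where
  antitone _ _ hst := setIntegral_mono_set (integrable_Kh hKint hη.ne').integrableOn
    (.of_forall fun x => mul_nonneg (inv_nonneg.2 hη.le) (hK0 _))
    (Ici_subset_Ici.2 hst).eventuallyLE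
  eq_one s hs := by
    have hleft : ∫ t in Iio s, Kh K η t = 0 :=
      setIntegral_eq_zero_of_forall_eq_zero fun t ht =>
        Kh_eq_zero hKsupp hη (by rw [mem_Iio] at ht; rw [abs_of_neg (by linarith)]; linarith)
    have := integral_add_compl (measurableSet_Ici (a := s)) (integrable_Kh hKint hη.ne')
    rwa [compl_Ici, hleft, add_zero, integral_Kh hKint hη] at this
  eq_zero s hs := by
    rw [kernelTail, integral_Ici_eq_integral_Ioi]
    exact setIntegral_eq_zero_of_forall_eq_zero fun t ht =>
      Kh_eq_zero hKsupp hη (by rw [mem_Ioi] at ht; rw [abs_of_pos (by linarith)]; linarith)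

end Kernel

lemma binvEst_eq (K : ℝ → ℝ) (l₀ r₀ ε h : ℝ) (g : ℝ → ℝ) (w : ℝ) :
    binvEst K l₀ r₀ ε h g w =
      (l₀ - 2 * ε) + ∫ u in Icc (l₀ - 2 * ε) (r₀ + 2 * ε), kernelTail K h (w - g u) := by
  simp only [binvEst, setIntegral_Iic_comp_sub_left, kernelTail, neg_sub_neg]

lemma monoEst_eq (K : ℝ → ℝ) (l₀ r₀ ε ℓ h : ℝ) {lo hi : ℝ} (hlohi : lo ≤ hi) (g : ℝ → ℝ)
    (x : ℝ) : monoEst K l₀ r₀ ε ℓ h lo hi g x =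
      lo + ∫ z in Ioc lo hi, kernelTail K ℓ (x - binvEst K l₀ r₀ ε h g z) := by
  simp only [monoEst, setIntegral_Iic_comp_sub_left, kernelTail, neg_sub_neg,
    intervalIntegral.integral_of_le hlohi]

section Estimator

variable {K b g : ℝ → ℝ} {l₀ r₀ ε ℓ h : ℝ}

lemma binvEst_antitone (hG : IsSmoothedStep (kernelTail K h) h) (hg : Measurable g) :
    Antitone (binvEst K l₀ r₀ ε h g) := by
  intro w₁ w₂ hw
  simp only [binvEst_eq]
  exact (add_le_add_iff_left _).2 (setIntegral_mono
    (hG.integrableOn_comp measure_Icc_lt_top.ne (hg.const_sub w₂))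
    (hG.integrableOn_comp measure_Icc_lt_top.ne (hg.const_sub w₁))
    fun u => hG.antitone (by linarith))

lemma monoEst_mem_Icc (hG : IsSmoothedStep (kernelTail K ℓ) ℓ) {lo hi : ℝ} (hlohi : lo ≤ hi)
    (g : ℝ → ℝ) (x : ℝ) : monoEst K l₀ r₀ ε ℓ h lo hi g x ∈ Icc lo hi := by
  rw [monoEst_eq _ _ _ _ _ _ hlohi]
  constructor
  · exact le_add_of_nonneg_right (setIntegral_nonneg measurableSet_Ioc fun z _ => hG.nonneg _)
  · have := norm_setIntegral_le_of_norm_le_const (μ := volume) (s := Ioc lo hi)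
      measure_Ioc_lt_top (C := 1) (f := fun z => kernelTail K ℓ (x - binvEst K l₀ r₀ ε h g z))
      fun z _ => hG.abs_le_one _
    rw [Real.volume_real_Ioc_of_le hlohi, one_mul] at this
    linarith [(abs_le.1 this).2]

lemma measurable_uncurry_monoEst (hG₁ : IsSmoothedStep (kernelTail K ℓ) ℓ)
    (hG₂ : IsSmoothedStep (kernelTail K h) h) {lo hi : ℝ} (hlohi : lo ≤ hi)
    {Ω : Type*} [MeasurableSpace Ω] {bhat : Ω → ℝ → ℝ} (hbm : Measurable (Function.uncurry bhat)) :
    Measurable (Function.uncurry fun ω x => monoEst K l₀ r₀ ε ℓ h lo hi (bhat ω) x) := by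
  have hT := measurable_uncurry_add_setIntegral_comp_sub hG₂.measurable hbm (l₀ - 2 * ε)
    (Icc (l₀ - 2 * ε) (r₀ + 2 * ε))
  simp only [← binvEst_eq] at hT
  simpa only [← monoEst_eq _ _ _ _ _ _ hlohi] using
    measurable_uncurry_add_setIntegral_comp_sub hG₁.measurable hT lo (Ioc lo hi)

lemma mapsTo_Icc_of_strictAntiOn (hε : 0 < ε)
    (hanti : StrictAntiOn b (Icc (l₀ - 2 * ε) (r₀ + 2 * ε))) :
    MapsTo b (Icc (l₀ - ε) (r₀ + ε)) (Icc (b (r₀ + ε)) (b (l₀ - ε))) :=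
  (hanti.antitoneOn.mono (Icc_subset_Icc (by linarith) (by linarith))).mapsTo_Icc

lemma setIntegral_abs_kernelTail_sub_binvEst_le (hε : 0 < ε) (hlr : l₀ ≤ r₀)
    (hb : ContinuousOn b (Icc (l₀ - 2 * ε) (r₀ + 2 * ε)))
    (hanti : StrictAntiOn b (Icc (l₀ - 2 * ε) (r₀ + 2 * ε)))
    (hG₁ : IsSmoothedStep (kernelTail K ℓ) ℓ) (hG₂ : IsSmoothedStep (kernelTail K h) h)
    (hg : Measurable g) {z : ℝ} (hz : z ∈ Icc (b (r₀ + ε)) (b (l₀ - ε))) :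
    ∫ x in Icc l₀ r₀, |kernelTail K ℓ (x - binvEst K l₀ r₀ ε h g z) - (Iio (b x)).indicator 1 z|
      ≤ (∫ u in Icc (l₀ - 2 * ε) (r₀ + 2 * ε),
          |kernelTail K h (z - g u) - (Iio (b u)).indicator 1 z|) + 2 * ℓ := by
  obtain ⟨u₀, hu₀, rfl⟩ : ∃ u₀ ∈ Icc (l₀ - ε) (r₀ + ε), b u₀ = z :=
    intermediate_value_Icc' (by linarith)
      (hb.mono (Icc_subset_Icc (by linarith) (by linarith))) hz
  have hu₀I : u₀ ∈ Icc (l₀ - 2 * ε) (r₀ + 2 * ε) :=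
    Icc_subset_Icc (by linarith) (by linarith) hu₀
  have hlevel : ∀ x ∈ Icc (l₀ - 2 * ε) (r₀ + 2 * ε),
      (Iio (b x)).indicator (1 : ℝ → ℝ) (b u₀) = (Iio u₀).indicator 1 x := fun x hx => by
    simp only [indicator_apply, mem_Iio, hanti.lt_iff_gt hu₀I hx, Pi.one_apply]
  calc ∫ x in Icc l₀ r₀,
          |kernelTail K ℓ (x - binvEst K l₀ r₀ ε h g (b u₀)) - (Iio (b x)).indicator 1 (b u₀)|
      = ∫ x in Ioc l₀ r₀,
          |kernelTail K ℓ (x - binvEst K l₀ r₀ ε h g (b u₀)) - (Iio u₀).indicator 1 x| := by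
        rw [integral_Icc_eq_integral_Ioc]
        refine setIntegral_congr_fun measurableSet_Ioc fun x hx => ?_
        rw [hlevel x (Icc_subset_Icc (by linarith) (by linarith) (Ioc_subset_Icc_self hx))]
    _ ≤ |binvEst K l₀ r₀ ε h g (b u₀) - u₀| + 2 * ℓ :=
        hG₁.setIntegral_Ioc_abs_sub_indicator_le hlr _ _
    _ ≤ _ := by
        gcongr
        rw [binvEst_eq, integral_Icc_eq_integral_Ioc, integral_Icc_eq_integral_Ioc]
        calc _ ≤ ∫ u in Ioc (l₀ - 2 * ε) (r₀ + 2 * ε),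
                |kernelTail K h (b u₀ - g u) - (Iio u₀).indicator 1 u| :=
              abs_add_setIntegral_Ioc_sub_le
                (hG₂.integrableOn_comp measure_Ioc_lt_top.ne (hg.const_sub _)) hu₀I
          _ = _ := setIntegral_congr_fun measurableSet_Ioc fun u hu => by
              rw [hlevel u (Ioc_subset_Icc_self hu)]

theorem setIntegral_abs_monoEst_sub_le_smoothingError (hε : 0 < ε) (hlr : l₀ ≤ r₀)
    (hb : Continuous b) (hanti : StrictAntiOn b (Icc (l₀ - 2 * ε) (r₀ + 2 * ε)))
    (hG₁ : IsSmoothedStep (kernelTail K ℓ) ℓ) (hG₂ : IsSmoothedStep (kernelTail K h) h)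
    (hg : Measurable g) :
    ∫ x in Icc l₀ r₀, |monoEst K l₀ r₀ ε ℓ h (b (r₀ + ε)) (b (l₀ - ε)) g x - b x| ≤
      (∫ z in Ioc (b (r₀ + ε)) (b (l₀ - ε)), ∫ u in Icc (l₀ - 2 * ε) (r₀ + 2 * ε),
          |kernelTail K h (z - g u) - (Iio (b u)).indicator 1 z|) +
        2 * ℓ * (b (l₀ - ε) - b (r₀ + ε)) := by
  set lo := b (r₀ + ε)
  set hi := b (l₀ - ε)
  set T := binvEst K l₀ r₀ ε h g
  have hbx : ∀ x ∈ Icc l₀ r₀, b x ∈ Icc lo hi := fun x hx =>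
    mapsTo_Icc_of_strictAntiOn hε hanti ⟨by linarith [hx.1], by linarith [hx.2]⟩
  have hlohi : lo ≤ hi := (mapsTo_Icc_of_strictAntiOn hε hanti ⟨le_rfl, by linarith⟩).1
  have hT : Measurable T := (binvEst_antitone hG₂ hg).measurable
  set f : ℝ → ℝ → ℝ := fun x z => |kernelTail K ℓ (x - T z) - (Iio (b x)).indicator 1 z|
  have hf : Integrable (Function.uncurry f)
      ((volume.restrict (Icc l₀ r₀)).prod (volume.restrict (Ioc lo hi))) :=
    integrable_uncurry_of_abs_le
      ((hG₁.measurable.comp (measurable_fst.sub (hT.comp measurable_snd))).sub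
        ((hb.measurable.comp measurable_fst).indicator_Iio_one measurable_snd)).abs
      fun x z => by rw [abs_abs]; exact hG₁.abs_sub_indicator_le_one _ _ _
  have hlevel : IntegrableOn (fun z => ∫ u in Icc (l₀ - 2 * ε) (r₀ + 2 * ε),
      |kernelTail K h (z - g u) - (Iio (b u)).indicator 1 z|) (Ioc lo hi) :=
    (hG₂.integrable_uncurry_abs_sub_indicator hg hb.measurable).integral_prod_left
  calc ∫ x in Icc l₀ r₀, |monoEst K l₀ r₀ ε ℓ h lo hi g x - b x|
      ≤ ∫ x in Icc l₀ r₀, ∫ z in Ioc lo hi, f x z := by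
        refine integral_mono_of_nonneg (.of_forall fun _ => abs_nonneg _)
          hf.integral_prod_left (ae_restrict_of_forall_mem measurableSet_Icc fun x hx => ?_)
        dsimp only
        rw [monoEst_eq _ _ _ _ _ _ hlohi]
        exact abs_add_setIntegral_Ioc_sub_le
          (hG₁.integrableOn_comp measure_Ioc_lt_top.ne (hT.const_sub x)) (hbx x hx)
    _ = ∫ z in Ioc lo hi, ∫ x in Icc l₀ r₀, f x z := integral_integral_swap hf
    _ ≤ ∫ z in Ioc lo hi, ((∫ u in Icc (l₀ - 2 * ε) (r₀ + 2 * ε),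
          |kernelTail K h (z - g u) - (Iio (b u)).indicator 1 z|) + 2 * ℓ) :=
        integral_mono_of_nonneg
          (.of_forall fun _ => setIntegral_nonneg measurableSet_Icc fun _ _ => abs_nonneg _)
          (hlevel.add (integrable_const _))
          (ae_restrict_of_forall_mem measurableSet_Ioc fun z hz =>
            setIntegral_abs_kernelTail_sub_binvEst_le hε hlr hb.continuousOn hanti hG₁ hG₂ hg
              (Ioc_subset_Icc_self hz))
    _ = _ := by
        rw [integral_add hlevel (integrable_const _), setIntegral_const,
          Real.volume_real_Ioc_of_le hlohi, smul_eq_mul]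
        ring

theorem setIntegral_abs_monoEst_sub_le (hε : 0 < ε) (hlr : l₀ ≤ r₀) (hh : 0 < h)
    (hb : Continuous b) (hanti : StrictAntiOn b (Icc (l₀ - 2 * ε) (r₀ + 2 * ε)))
    (hG₁ : IsSmoothedStep (kernelTail K ℓ) ℓ) (hG₂ : IsSmoothedStep (kernelTail K h) h)
    (hg : Measurable g)
    (hg2 : IntegrableOn (fun u => |g u - b u| ^ 2) (Icc (l₀ - 2 * ε) (r₀ + 2 * ε))) :
    ∫ x in Icc l₀ r₀, |monoEst K l₀ r₀ ε ℓ h (b (r₀ + ε)) (b (l₀ - ε)) g x - b x| ≤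
      2 * ℓ * (b (l₀ - ε) - b (r₀ + ε)) + 5 / 2 * h * (r₀ - l₀ + 4 * ε) +
        (∫ u in Icc (l₀ - 2 * ε) (r₀ + 2 * ε), |g u - b u| ^ 2) / (2 * h) := by
  have hlohi : b (r₀ + ε) ≤ b (l₀ - ε) :=
    (mapsTo_Icc_of_strictAntiOn hε hanti ⟨le_rfl, by linarith⟩).1
  have hamgm (t : ℝ) : |t| ≤ h / 2 + |t| ^ 2 / (2 * h) := by
    rw [div_add_div _ _ two_ne_zero (by positivity), le_div_iff₀ (by positivity)]
    nlinarith [sq_nonneg (|t| - h)]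
  have hsmooth (u : ℝ) := hG₂.setIntegral_Ioc_abs_sub_indicator_le hlohi (g u) (b u)
  calc _ ≤ _ := setIntegral_abs_monoEst_sub_le_smoothingError hε hlr hb hanti hG₁ hG₂ hg
    _ = (∫ u in Icc (l₀ - 2 * ε) (r₀ + 2 * ε), ∫ z in Ioc (b (r₀ + ε)) (b (l₀ - ε)),
          |kernelTail K h (z - g u) - (Iio (b u)).indicator 1 z|) +
        2 * ℓ * (b (l₀ - ε) - b (r₀ + ε)) := by
        rw [integral_integral_swap (hG₂.integrable_uncurry_abs_sub_indicator hg hb.measurable)]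
    _ ≤ (∫ u in Icc (l₀ - 2 * ε) (r₀ + 2 * ε), (5 / 2 * h + |g u - b u| ^ 2 / (2 * h))) +
        2 * ℓ * (b (l₀ - ε) - b (r₀ + ε)) := by
        refine add_le_add (integral_mono_of_nonneg (.of_forall fun _ =>
            setIntegral_nonneg measurableSet_Ioc fun _ _ => abs_nonneg _)
          ((integrable_const _).add (hg2.div_const _))
          (.of_forall fun u => ?_)) le_rfl
        linarith [hsmooth u, hamgm (g u - b u)]
    _ = _ := by
        rw [integral_add (integrable_const _) (hg2.div_const _), setIntegral_const, integral_div,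
          Real.volume_real_Icc_of_le (by linarith), smul_eq_mul]
        ring


lemma integrable_uncurry_abs_monoEst_sub (hε : 0 < ε) (hlr : l₀ ≤ r₀) (hb : Continuous b)
    (hanti : StrictAntiOn b (Icc (l₀ - 2 * ε) (r₀ + 2 * ε)))
    (hG₁ : IsSmoothedStep (kernelTail K ℓ) ℓ) (hG₂ : IsSmoothedStep (kernelTail K h) h)
    {Ω : Type*} [MeasurableSpace Ω] (P : Measure Ω) [IsFiniteMeasure P]
    {bhat : Ω → ℝ → ℝ} (hbm : Measurable (Function.uncurry bhat)) :
    Integrable (Function.uncurry fun x ω =>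
        |monoEst K l₀ r₀ ε ℓ h (b (r₀ + ε)) (b (l₀ - ε)) (bhat ω) x - b x|)
      ((volume.restrict (Icc l₀ r₀)).prod P) := by
  have hbx : ∀ x ∈ Icc l₀ r₀, b x ∈ Icc (b (r₀ + ε)) (b (l₀ - ε)) := fun x hx =>
    mapsTo_Icc_of_strictAntiOn hε hanti ⟨by linarith [hx.1], by linarith [hx.2]⟩
  have hlohi := (mapsTo_Icc_of_strictAntiOn hε hanti ⟨le_rfl, by linarith⟩).1
  refine (integrable_const (b (l₀ - ε) - b (r₀ + ε))).mono'
    (((measurable_uncurry_monoEst hG₁ hG₂ hlohi hbm).comp measurable_swap).sub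
      (hb.measurable.comp measurable_fst)).abs.aestronglyMeasurable
    (Measure.quasiMeasurePreserving_fst.ae (ae_restrict_mem measurableSet_Icc) |>.mono ?_)
  rintro ⟨x, ω⟩ hx
  have hm := monoEst_mem_Icc (l₀ := l₀) (r₀ := r₀) (ε := ε) (h := h) hG₁ hlohi (bhat ω) x
  have := hbx x hx
  simp only [Function.uncurry_apply_pair, Real.norm_eq_abs, abs_abs, abs_le, mem_Icc] at *
  constructor <;> linarith

theorem setIntegral_integral_abs_monoEst_sub_le_of_continuous (hε : 0 < ε) (hlr : l₀ ≤ r₀)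
    (hh : 0 < h) (hb : Continuous b) (hanti : StrictAntiOn b (Icc (l₀ - 2 * ε) (r₀ + 2 * ε)))
    (hG₁ : IsSmoothedStep (kernelTail K ℓ) ℓ) (hG₂ : IsSmoothedStep (kernelTail K h) h)
    {Ω : Type*} [MeasurableSpace Ω] (P : Measure Ω) [IsProbabilityMeasure P]
    {bhat : Ω → ℝ → ℝ} (hbm : Measurable (Function.uncurry bhat))
    (h2 : ∀ x ∈ Icc (l₀ - 2 * ε) (r₀ + 2 * ε), Integrable (fun ω => |bhat ω x - b x| ^ 2) P)
    (h3 : IntegrableOn (fun x => ∫ ω, |bhat ω x - b x| ^ 2 ∂P) (Icc (l₀ - 2 * ε) (r₀ + 2 * ε))) :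
    ∫ x in Icc l₀ r₀, ∫ ω, |monoEst K l₀ r₀ ε ℓ h (b (r₀ + ε)) (b (l₀ - ε)) (bhat ω) x - b x| ∂P ≤
      2 * ℓ * (b (l₀ - ε) - b (r₀ + ε)) + 5 / 2 * h * (r₀ - l₀ + 4 * ε) +
        (∫ x in Icc (l₀ - 2 * ε) (r₀ + 2 * ε), ∫ ω, |bhat ω x - b x| ^ 2 ∂P) / (2 * h) := by
  set lo := b (r₀ + ε)
  set hi := b (l₀ - ε)
  set I := Icc (l₀ - 2 * ε) (r₀ + 2 * ε)
  have hsq : Integrable (Function.uncurry fun x ω => |bhat ω x - b x| ^ 2)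
      ((volume.restrict I).prod P) :=
    integrable_uncurry_sq_abs_sub measurableSet_Icc hb.measurable hbm h2 h3
  have hD : Integrable (fun ω => ∫ x in I, |bhat ω x - b x| ^ 2) P := hsq.swap.integral_prod_left
  have hae : ∀ᵐ ω ∂P, IntegrableOn (fun x => |bhat ω x - b x| ^ 2) I := hsq.swap.prod_right_ae
  have herr := integrable_uncurry_abs_monoEst_sub hε hlr hb hanti hG₁ hG₂ P hbm
  calc ∫ x in Icc l₀ r₀, ∫ ω, |monoEst K l₀ r₀ ε ℓ h lo hi (bhat ω) x - b x| ∂P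
      = ∫ ω, (∫ x in Icc l₀ r₀, |monoEst K l₀ r₀ ε ℓ h lo hi (bhat ω) x - b x|) ∂P :=
        integral_integral_swap herr
    _ ≤ ∫ ω, (2 * ℓ * (hi - lo) + 5 / 2 * h * (r₀ - l₀ + 4 * ε) +
          (∫ x in I, |bhat ω x - b x| ^ 2) / (2 * h)) ∂P :=
        integral_mono_of_nonneg
          (.of_forall fun _ => setIntegral_nonneg measurableSet_Icc fun _ _ => abs_nonneg _)
          ((integrable_const _).add (hD.div_const _))
          (hae.mono fun ω hω => setIntegral_abs_monoEst_sub_le hε hlr hh hb hanti hG₁ hG₂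
            hbm.of_uncurry_left hω)
    _ = _ := by
        rw [integral_add (integrable_const _) (hD.div_const _), integral_const, integral_div,
          ← integral_integral_swap hsq]
        simp

theorem setIntegral_integral_abs_monoEst_sub_le (hε : 0 < ε) (hlr : l₀ ≤ r₀) (hh : 0 < h)
    (hb : ContinuousOn b (Icc (l₀ - 2 * ε) (r₀ + 2 * ε)))
    (hanti : StrictAntiOn b (Icc (l₀ - 2 * ε) (r₀ + 2 * ε)))
    (hG₁ : IsSmoothedStep (kernelTail K ℓ) ℓ) (hG₂ : IsSmoothedStep (kernelTail K h) h)
    {Ω : Type*} [MeasurableSpace Ω] (P : Measure Ω) [IsProbabilityMeasure P]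
    {bhat : Ω → ℝ → ℝ} (hbm : Measurable (Function.uncurry bhat))
    (h2 : ∀ x ∈ Icc (l₀ - 2 * ε) (r₀ + 2 * ε), Integrable (fun ω => |bhat ω x - b x| ^ 2) P)
    (h3 : IntegrableOn (fun x => ∫ ω, |bhat ω x - b x| ^ 2 ∂P) (Icc (l₀ - 2 * ε) (r₀ + 2 * ε))) :
    ∫ x in Icc l₀ r₀, ∫ ω, |monoEst K l₀ r₀ ε ℓ h (b (r₀ + ε)) (b (l₀ - ε)) (bhat ω) x - b x| ∂P ≤
      2 * ℓ * (b (l₀ - ε) - b (r₀ + ε)) + 5 / 2 * h * (r₀ - l₀ + 4 * ε) +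
        (∫ x in Icc (l₀ - 2 * ε) (r₀ + 2 * ε), ∫ ω, |bhat ω x - b x| ^ 2 ∂P) / (2 * h) := by
  obtain ⟨bc, hbc, hbcb⟩ := hb.exists_continuous_eqOn_Icc (by linarith)
  have hI : ∀ {x}, x ∈ Icc (l₀ - ε) (r₀ + ε) → x ∈ Icc (l₀ - 2 * ε) (r₀ + 2 * ε) := fun hx =>
    Icc_subset_Icc (by linarith) (by linarith) hx
  have key := setIntegral_integral_abs_monoEst_sub_le_of_continuous hε hlr hh hbc
    (hanti.congr hbcb.symm) hG₁ hG₂ P hbm (fun x hx => by rw [hbcb hx]; exact h2 x hx)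
    (h3.congr_fun (fun x hx => by simp only [hbcb hx]) measurableSet_Icc)
  have hrisk : ∫ x in Icc (l₀ - 2 * ε) (r₀ + 2 * ε), ∫ ω, |bhat ω x - bc x| ^ 2 ∂P =
      ∫ x in Icc (l₀ - 2 * ε) (r₀ + 2 * ε), ∫ ω, |bhat ω x - b x| ^ 2 ∂P :=
    setIntegral_congr_fun measurableSet_Icc fun x hx => by simp only [hbcb hx]
  rw [hbcb (hI ⟨by linarith, le_rfl⟩), hbcb (hI ⟨le_rfl, by linarith⟩), hrisk] at key
  refine le_of_eq_of_le (setIntegral_congr_fun measurableSet_Icc fun x hx => ?_) key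
  simp only [hbcb (hI (x := x) ⟨by linarith [hx.1], by linarith [hx.2]⟩)]

end Estimator

theorem stmt1_general (l₀ r₀ ε mb : ℝ) (K b b' : ℝ → ℝ)
    (hlr : l₀ < r₀) (hε : 0 < ε) (hmb : 0 < mb)
    -- kernel assumptions
    (hK0 : ∀ y, 0 ≤ K y)
    (hKsupp : ∀ y, 1 < |y| → K y = 0) (hKint : ∫ y, K y = 1)
    -- `b` is continuously differentiable on `I_{2ε}` with `b' ≤ -mb` there
    (hbd : ∀ x ∈ Set.Icc (l₀ - 2 * ε) (r₀ + 2 * ε), HasDerivAt b (b' x) x)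
    (hb'le : ∀ x ∈ Set.Icc (l₀ - 2 * ε) (r₀ + 2 * ε), b' x ≤ -mb) :
    ∃ C > 0, ∀ (Ω : Type) [MeasurableSpace Ω] (P : Measure Ω) [IsProbabilityMeasure P]
      (bhat : Ω → ℝ → ℝ), Measurable (Function.uncurry bhat) →
      (∀ x ∈ Set.Icc (l₀ - 2 * ε) (r₀ + 2 * ε),
        Integrable (fun ω => |bhat ω x - b x| ^ 2) P) →
      IntegrableOn (fun x => ∫ ω, |bhat ω x - b x| ^ 2 ∂P)
        (Set.Icc (l₀ - 2 * ε) (r₀ + 2 * ε)) →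
      ∀ ℓ h : ℝ, 0 < ℓ → ℓ < min 1 mb * ε → 0 < h → h < min 1 mb * ε →
      (∫ x in Set.Icc l₀ r₀,
          ∫ ω, |monoEst K l₀ r₀ ε ℓ h (b (r₀ + ε)) (b (l₀ - ε)) (bhat ω) x - b x| ∂P) ≤
        C * (ℓ + h +
          Real.sqrt (∫ x in Set.Icc (l₀ - 2 * ε) (r₀ + 2 * ε),
            ∫ ω, |bhat ω x - b x| ^ 2 ∂P) +
          (∫ x in Set.Icc (l₀ - 2 * ε) (r₀ + 2 * ε),
            ∫ ω, |bhat ω x - b x| ^ 2 ∂P) / h) := by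
  have hbc : ContinuousOn b (Icc (l₀ - 2 * ε) (r₀ + 2 * ε)) := fun x hx =>
    (hbd x hx).continuousAt.continuousWithinAt
  have hanti : StrictAntiOn b (Icc (l₀ - 2 * ε) (r₀ + 2 * ε)) :=
    strictAntiOn_of_deriv_neg (convex_Icc _ _) hbc fun x hx => by
      rw [interior_Icc] at hx
      rw [(hbd x (Ioo_subset_Icc_self hx)).deriv]
      linarith [hb'le x (Ioo_subset_Icc_self hx)]
  have hlohi : b (r₀ + ε) ≤ b (l₀ - ε) :=
    (mapsTo_Icc_of_strictAntiOn hε hanti ⟨le_rfl, by linarith⟩).1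
  refine ⟨2 * (b (l₀ - ε) - b (r₀ + ε)) + 5 / 2 * (r₀ - l₀ + 4 * ε) + 1, by nlinarith, ?_⟩
  intro Ω _ P _ bhat hbm h2 h3 ℓ h hℓ _ hh _
  have key := setIntegral_integral_abs_monoEst_sub_le hε hlr.le hh hbc hanti
    (isSmoothedStep_kernelTail hK0 hKsupp hKint hℓ) (isSmoothedStep_kernelTail hK0 hKsupp hKint hh)
    P hbm h2 h3
  set R := ∫ x in Icc (l₀ - 2 * ε) (r₀ + 2 * ε), ∫ ω, |bhat ω x - b x| ^ 2 ∂P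
  have hR : 0 ≤ R :=
    setIntegral_nonneg measurableSet_Icc fun x _ => integral_nonneg fun ω => by positivity
  have hRh : R / (2 * h) = R / h / 2 := by ring
  nlinarith [Real.sqrt_nonneg R, div_nonneg hR hh.le]

/-- Theorem 2.2: `L¹`-risk bound for the strictly decreasing estimator `b̂_{ℓ,h}`. -/
theorem stmt1 (l₀ r₀ ε mb : ℝ) (K b b' binv : ℝ → ℝ)
    (hlr : l₀ < r₀) (hε : 0 < ε) (hε1 : ε ≤ 1) (hmb : 0 < mb)
    -- kernel assumptions
    (hK0 : ∀ y, 0 ≤ K y) (hK2 : ContDiff ℝ 2 K) (hKsymm : ∀ y, K (-y) = K y)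
    (hKsupp : ∀ y, 1 < |y| → K y = 0) (hKint : ∫ y, K y = 1)
    -- `b` is continuously differentiable on `I_{2ε}` with `b' ≤ -mb` there
    (hbd : ∀ x ∈ Set.Icc (l₀ - 2 * ε) (r₀ + 2 * ε), HasDerivAt b (b' x) x)
    (hb'c : ContinuousOn b' (Set.Icc (l₀ - 2 * ε) (r₀ + 2 * ε)))
    (hb'le : ∀ x ∈ Set.Icc (l₀ - 2 * ε) (r₀ + 2 * ε), b' x ≤ -mb)
    -- `binv` is the inverse of `b` on `I_{2ε}`
    (hbinv : ∀ x ∈ Set.Icc (l₀ - 2 * ε) (r₀ + 2 * ε), binv (b x) = x) :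
    ∃ C > 0, ∀ (Ω : Type) [MeasurableSpace Ω] (P : Measure Ω) [IsProbabilityMeasure P]
      (bhat : Ω → ℝ → ℝ), Measurable (Function.uncurry bhat) →
      (∀ x ∈ Set.Icc (l₀ - 2 * ε) (r₀ + 2 * ε),
        Integrable (fun ω => |bhat ω x - b x| ^ 2) P) →
      IntegrableOn (fun x => ∫ ω, |bhat ω x - b x| ^ 2 ∂P)
        (Set.Icc (l₀ - 2 * ε) (r₀ + 2 * ε)) →
      ∀ ℓ h : ℝ, 0 < ℓ → ℓ < min 1 mb * ε → 0 < h → h < min 1 mb * ε →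
      (∫ x in Set.Icc l₀ r₀,
          ∫ ω, |monoEst K l₀ r₀ ε ℓ h (b (r₀ + ε)) (b (l₀ - ε)) (bhat ω) x - b x| ∂P) ≤
        C * (ℓ + h +
          Real.sqrt (∫ x in Set.Icc (l₀ - 2 * ε) (r₀ + 2 * ε),
            ∫ ω, |bhat ω x - b x| ^ 2 ∂P) +
          (∫ x in Set.Icc (l₀ - 2 * ε) (r₀ + 2 * ε),
            ∫ ω, |bhat ω x - b x| ^ 2 ∂P) / h) :=
  stmt1_general l₀ r₀ ε mb K b b' hlr hε hmb hK0 hKsupp hKint hbd hb'le
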